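/- Let γ > 1 and B, S > 0 be real constants, 𝔱(ρ) := 2ρ²(B − ρ^{γ−1}S), ϱ_c := (2B/((γ+1)S))^{1/(γ−1)}, ϱ_m := (B/S)^{1/(γ−1)}, 𝔱_c := (γ−1)(2B/(γ+1))^{(γ+1)/(γ−1)} S^{−2/(γ−1)}, let ρ̂ be the inverse of 𝔱 on [ϱ_c, ϱ_m], and set g(t) := 1/ρ̂(t) for t ∈ [0, 𝔱_c). Then g'(t) > 0 for every t ∈ [0, 𝔱_c), and g'(t) → +∞ as t → 𝔱_c from below. -/

import Mathlib

/-!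
Since `𝔱'(ρ) = 2ρ(2B - (γ+1)Sρ^(γ-1))` vanishes only at `ϱ_c`, `𝔱` is strictly decreasing on
`[ϱ_c, ∞)`, and `𝔱(ϱ_c) = 𝔱_c`. A continuous map that is injective on the compact interval
`[ϱ_c, ϱ_m]` has a continuous inverse there, so `ρ̂` is continuous and the inverse function rule gives
`g' = -ρ̂'/ρ̂² = 1/(-𝔱'(ρ̂) ρ̂²) > 0`. As `t → 𝔱_c`, `ρ̂(t) → ϱ_c`, where `𝔱'` vanishes, so
`g'(t) → +∞`.
-/

open Filter Set Topology

theorem HasDerivWithinAt.of_local_left_inverse {𝕜 : Type*} [NontriviallyNormedField 𝕜]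
    {f g : 𝕜 → 𝕜} {f' a : 𝕜} {s t : Set 𝕜} (hg : Tendsto g (𝓝[s] a) (𝓝[t] (g a)))
    (hf : HasDerivWithinAt f f' t (g a)) (hf' : f' ≠ 0) (ha : a ∈ s)
    (hfg : ∀ᶠ y in 𝓝[s] a, f (g y) = y) : HasDerivWithinAt g f'⁻¹ s a :=
  HasFDerivWithinAt.of_local_left_inverse
    (f' := ContinuousLinearEquiv.unitsEquivAut 𝕜 (Units.mk0 f' hf')) hg hf ha hfg

theorem IsCompact.tendsto_of_injOn_of_tendsto_comp {α X Y : Type*} [TopologicalSpace X]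
    [TopologicalSpace Y] [T2Space Y] {K : Set X} (hK : IsCompact K) {f : X → Y}
    (hf : ∀ x ∈ K, ContinuousAt f x) (hinj : InjOn f K) {l : Filter α} {u : α → X}
    (hu : ∀ᶠ a in l, u a ∈ K) {x : X} (hx : x ∈ K) (hfu : Tendsto (f ∘ u) l (𝓝 (f x))) :
    Tendsto u l (𝓝 x) :=
  hK.tendsto_nhds_of_unique_mapClusterPt hu fun y hy hclust =>
    hinj hy hx (eq_of_nhds_neBot (ClusterPt.mono (hclust.continuousAt_comp (hf y hy)) hfu).neBot)

noncomputable section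

namespace SonicFlow

variable (γ B S : ℝ)

def momentumSq (ρ : ℝ) : ℝ := 2 * ρ ^ 2 * (B - ρ ^ (γ - 1) * S)

def momentumSqDeriv (ρ : ℝ) : ℝ := 2 * ρ * (2 * B - (γ + 1) * S * ρ ^ (γ - 1))

def criticalDensity : ℝ := (2 * B / ((γ + 1) * S)) ^ (1 / (γ - 1))

def maxDensity : ℝ := (B / S) ^ (1 / (γ - 1))

def criticalMomentumSq : ℝ :=
  (γ - 1) * (2 * B / (γ + 1)) ^ ((γ + 1) / (γ - 1)) * S ^ (-(2 / (γ - 1)))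

variable {γ B S}

theorem hasDerivAt_momentumSq {ρ : ℝ} (hρ : 0 < ρ) :
    HasDerivAt (momentumSq γ B S) (momentumSqDeriv γ B S ρ) ρ := by
  have hpow : HasDerivAt (fun x : ℝ => x ^ (γ - 1)) ((γ - 1) * ρ ^ (γ - 1 - 1)) ρ :=
    Real.hasDerivAt_rpow_const (Or.inl hρ.ne')
  refine (((hasDerivAt_pow 2 ρ).const_mul 2).mul ((hpow.mul_const S).const_sub B)).congr_deriv ?_
  rw [momentumSqDeriv, Real.rpow_sub_one hρ.ne' (γ - 1)]
  field_simp
  ring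

theorem criticalDensity_pos (hγ : 1 < γ) (hB : 0 < B) (hS : 0 < S) :
    0 < criticalDensity γ B S := by
  have : 0 < γ + 1 := by linarith
  unfold criticalDensity
  positivity

theorem criticalDensity_rpow (hγ : 1 < γ) (hB : 0 < B) (hS : 0 < S) :
    criticalDensity γ B S ^ (γ - 1) = 2 * B / ((γ + 1) * S) := by
  have : 0 < γ + 1 := by linarith
  rw [criticalDensity, one_div, Real.rpow_inv_rpow (by positivity) (by linarith)]

theorem criticalDensity_le_maxDensity (hγ : 1 < γ) (hB : 0 < B) (hS : 0 < S) :
    criticalDensity γ B S ≤ maxDensity γ B S := by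
  have : 0 < γ + 1 := by linarith
  refine Real.rpow_le_rpow (by positivity) ?_ (one_div_nonneg.2 (by linarith))
  rw [mul_comm, ← div_div, div_le_div_iff_of_pos_right hS, div_le_iff₀ this]
  nlinarith

theorem momentumSq_criticalDensity (hγ : 1 < γ) (hB : 0 < B) (hS : 0 < S) :
    momentumSq γ B S (criticalDensity γ B S) = criticalMomentumSq γ B S := by
  set a := 2 * B / (γ + 1) with ha_def
  have hσ : γ - 1 ≠ 0 := by linarith
  have ha : 0 < a := by positivity
  have hsq : criticalDensity γ B S ^ 2 = a ^ (2 / (γ - 1)) * S ^ (-(2 / (γ - 1))) := by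
    rw [criticalDensity, ← div_div, ← Real.rpow_natCast, ← Real.rpow_mul (by positivity),
      show 1 / (γ - 1) * ((2 : ℕ) : ℝ) = 2 / (γ - 1) by push_cast; ring,
      Real.div_rpow ha.le hS.le, Real.rpow_neg hS.le, div_eq_mul_inv]
  have hpow : a ^ ((γ + 1) / (γ - 1)) = a * a ^ (2 / (γ - 1)) := by
    rw [show (γ + 1) / (γ - 1) = 1 + 2 / (γ - 1) by field_simp; ring, Real.rpow_add ha,
      Real.rpow_one]
  have : γ + 1 ≠ 0 := by linarith
  rw [momentumSq, criticalDensity_rpow hγ hB hS, hsq, criticalMomentumSq, hpow, ha_def]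
  field_simp
  ring

theorem momentumSqDeriv_criticalDensity (hγ : 1 < γ) (hB : 0 < B) (hS : 0 < S) :
    momentumSqDeriv γ B S (criticalDensity γ B S) = 0 := by
  have : γ + 1 ≠ 0 := by linarith
  rw [momentumSqDeriv, criticalDensity_rpow hγ hB hS]
  field_simp
  ring

theorem momentumSqDeriv_neg (hγ : 1 < γ) (hB : 0 < B) (hS : 0 < S) {ρ : ℝ}
    (hρ : criticalDensity γ B S < ρ) : momentumSqDeriv γ B S ρ < 0 := by
  have hc := criticalDensity_pos hγ hB hS
  have hlt := Real.rpow_lt_rpow hc.le hρ (by linarith : 0 < γ - 1)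
  rw [criticalDensity_rpow hγ hB hS, div_lt_iff₀ (by nlinarith)] at hlt
  exact mul_neg_of_pos_of_neg (by linarith) (by linarith)

theorem strictAntiOn_momentumSq (hγ : 1 < γ) (hB : 0 < B) (hS : 0 < S) :
    StrictAntiOn (momentumSq γ B S) (Ici (criticalDensity γ B S)) := by
  have hc := criticalDensity_pos hγ hB hS
  refine strictAntiOn_of_hasDerivWithinAt_neg (convex_Ici _) (f' := momentumSqDeriv γ B S)
    (fun x hx => (hasDerivAt_momentumSq (hc.trans_le hx)).continuousAt.continuousWithinAt)
    (fun x hx => ?_) (fun x hx => ?_) <;> rw [interior_Ici] at hx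
  · exact (hasDerivAt_momentumSq (hc.trans hx)).hasDerivWithinAt
  · exact momentumSqDeriv_neg hγ hB hS hx

def InvertsMomentumSqOn (γ B S : ℝ) (r : ℝ → ℝ) (U : Set ℝ) : Prop :=
  ∀ s ∈ U, r s ∈ Ioc (criticalDensity γ B S) (maxDensity γ B S) ∧ momentumSq γ B S (r s) = s

namespace InvertsMomentumSqOn

variable {r : ℝ → ℝ} {U : Set ℝ}

theorem tendsto (hγ : 1 < γ) (hB : 0 < B) (hS : 0 < S) (hr : InvertsMomentumSqOn γ B S r U)
    {ρ : ℝ} (hρ : ρ ∈ Icc (criticalDensity γ B S) (maxDensity γ B S)) :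
    Tendsto r (𝓝[U] (momentumSq γ B S ρ)) (𝓝 ρ) := by
  have hc := criticalDensity_pos hγ hB hS
  refine isCompact_Icc.tendsto_of_injOn_of_tendsto_comp
    (fun x hx => (hasDerivAt_momentumSq (hc.trans_le hx.1)).continuousAt)
    ((strictAntiOn_momentumSq hγ hB hS).injOn.mono Icc_subset_Ici_self)
    (eventually_nhdsWithin_of_forall fun s hs => Ioc_subset_Icc_self (hr s hs).1) hρ ?_
  exact (tendsto_id.mono_left nhdsWithin_le_nhds).congr'
    (eventually_nhdsWithin_of_forall fun s hs => (hr s hs).2.symm)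

theorem hasDerivWithinAt (hγ : 1 < γ) (hB : 0 < B) (hS : 0 < S)
    (hr : InvertsMomentumSqOn γ B S r U) {s : ℝ} (hs : s ∈ U) :
    HasDerivWithinAt r (momentumSqDeriv γ B S (r s))⁻¹ U s := by
  obtain ⟨hmem, hinv⟩ := hr s hs
  have hcont : Tendsto r (𝓝[U] s) (𝓝[univ] (r s)) := by
    simpa only [nhdsWithin_univ, hinv] using hr.tendsto hγ hB hS (Ioc_subset_Icc_self hmem)
  exact HasDerivWithinAt.of_local_left_inverse hcont
    (hasDerivAt_momentumSq ((criticalDensity_pos hγ hB hS).trans hmem.1)).hasDerivWithinAt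
    (momentumSqDeriv_neg hγ hB hS hmem.1).ne hs
    (eventually_nhdsWithin_of_forall fun y hy => (hr y hy).2)

theorem hasDerivWithinAt_one_div (hγ : 1 < γ) (hB : 0 < B) (hS : 0 < S)
    (hr : InvertsMomentumSqOn γ B S r U) {s : ℝ} (hs : s ∈ U) :
    HasDerivWithinAt (fun s => 1 / r s) (-momentumSqDeriv γ B S (r s) * r s ^ 2)⁻¹ U s := by
  have hpos : 0 < r s := (criticalDensity_pos hγ hB hS).trans (hr s hs).1.1
  rw [mul_inv, inv_neg, ← div_eq_mul_inv]
  simp only [one_div]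
  exact (hr.hasDerivWithinAt hγ hB hS hs).inv hpos.ne'

theorem neg_momentumSqDeriv_mul_sq_pos (hγ : 1 < γ) (hB : 0 < B) (hS : 0 < S)
    (hr : InvertsMomentumSqOn γ B S r U) {s : ℝ} (hs : s ∈ U) :
    0 < -momentumSqDeriv γ B S (r s) * r s ^ 2 :=
  have hρ := (hr s hs).1.1
  mul_pos (neg_pos.2 (momentumSqDeriv_neg hγ hB hS hρ))
    (pow_pos ((criticalDensity_pos hγ hB hS).trans hρ) 2)

theorem tendsto_inv_atTop (hγ : 1 < γ) (hB : 0 < B) (hS : 0 < S)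
    (hr : InvertsMomentumSqOn γ B S r U) :
    Tendsto (fun s => (-momentumSqDeriv γ B S (r s) * r s ^ 2)⁻¹)
      (𝓝[U] criticalMomentumSq γ B S) atTop := by
  have hlim : Tendsto r (𝓝[U] criticalMomentumSq γ B S) (𝓝 (criticalDensity γ B S)) := by
    simpa only [momentumSq_criticalDensity hγ hB hS] using
      hr.tendsto hγ hB hS ⟨le_rfl, criticalDensity_le_maxDensity hγ hB hS⟩
  have hcont :
      ContinuousAt (fun ρ => -momentumSqDeriv γ B S ρ * ρ ^ 2) (criticalDensity γ B S) := by
    unfold momentumSqDeriv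
    fun_prop (disch := positivity)
  have hzero : Tendsto (fun s => -momentumSqDeriv γ B S (r s) * r s ^ 2)
      (𝓝[U] criticalMomentumSq γ B S) (𝓝 0) := by
    simpa only [Function.comp_def, momentumSqDeriv_criticalDensity hγ hB hS, neg_zero,
      zero_mul] using hcont.tendsto.comp hlim
  exact tendsto_inv_nhdsGT_zero.comp (tendsto_nhdsWithin_iff.2 ⟨hzero,
    eventually_nhdsWithin_of_forall fun s hs => hr.neg_momentumSqDeriv_mul_sq_pos hγ hB hS hs⟩)

end InvertsMomentumSqOn

end SonicFlow

end

open SonicFlow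

/-- Degeneracy at the sonic state (Lemma 2.5): with
`g = 1/ρ̂` where `ρ̂` inverts `𝔱(ρ) = 2ρ²(B − ρ^{γ−1}S)` on `(ϱ_c, ϱ_m]`,
one has `g'(t) > 0` on `[0, 𝔱_c)` and `g'(t) → +∞` as `t → 𝔱_c⁻`. -/
theorem stmt_9 (γ B S : ℝ) (hγ : 1 < γ) (hB : 0 < B) (hS : 0 < S)
    (t : ℝ → ℝ) (ht : ∀ ρ : ℝ, t ρ = 2 * ρ ^ 2 * (B - ρ ^ (γ - 1) * S))
    (rc rm tc : ℝ)
    (hrc : rc = (2 * B / ((γ + 1) * S)) ^ (1 / (γ - 1)))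
    (hrm : rm = (B / S) ^ (1 / (γ - 1)))
    (htc : tc = (γ - 1) * (2 * B / (γ + 1)) ^ ((γ + 1) / (γ - 1)) * S ^ (-(2 / (γ - 1))))
    (r : ℝ → ℝ)
    (hr : ∀ s ∈ Set.Ico 0 tc, r s ∈ Set.Ioc rc rm ∧ t (r s) = s)
    (g : ℝ → ℝ) (hg : ∀ s, g s = 1 / r s) :
    (∀ s ∈ Set.Ico 0 tc, 0 < derivWithin g (Set.Ico 0 tc) s) ∧
      Filter.Tendsto (fun s => derivWithin g (Set.Ico 0 tc) s)
        (nhdsWithin tc (Set.Ico 0 tc)) Filter.atTop := by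
  obtain rfl : t = momentumSq γ B S := funext ht
  obtain rfl : g = fun s => 1 / r s := funext hg
  obtain rfl : tc = criticalMomentumSq γ B S := htc
  obtain rfl : rc = criticalDensity γ B S := hrc
  obtain rfl : rm = maxDensity γ B S := hrm
  change InvertsMomentumSqOn γ B S r (Ico 0 (criticalMomentumSq γ B S)) at hr
  have hderiv : ∀ s ∈ Ico 0 (criticalMomentumSq γ B S),
      derivWithin (fun s => 1 / r s) (Ico 0 (criticalMomentumSq γ B S)) s
        = (-momentumSqDeriv γ B S (r s) * r s ^ 2)⁻¹ := fun s hs =>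
    (hr.hasDerivWithinAt_one_div hγ hB hS hs).derivWithin (uniqueDiffOn_Ico _ _ s hs)
  refine ⟨fun s hs => ?_, (hr.tendsto_inv_atTop hγ hB hS).congr'
    (eventually_nhdsWithin_of_forall fun s hs => (hderiv s hs).symm)⟩
  rw [hderiv s hs]
  exact inv_pos.2 (hr.neg_momentumSqDeriv_mul_sq_pos hγ hB hS hs)
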